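/- Assume V is nonempty and let δ = (β/α) · max_{l ∈ V} Σ_{j ∈ V} s(l,j). Define the offset objective f_δ(S) = α · Σ_{v ∈ S} (u(v) + δ) − (β/2) · Σ_{v ∈ S} Σ_{w ∈ S} s(v,w), where additionally u(v) ≥ 0 for all v ∈ V. Then f_δ is monotone non-decreasing: for all B ⊆ A ⊆ V, f_δ(B) ≤ f_δ(A). -/

import Mathlib

/-!
Adding `v ∉ S` to `S` changes the pairwise objective by `α u v - β Σ_{w ∈ S} s v w - (β/2) s v v`
(the cross terms come in symmetric pairs), and this gain is at least `α u v - β Σ_j s v j`.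
The offset `δ` is chosen exactly so that `α δ` dominates every scaled row sum `β Σ_j s v j`,
so with nonnegative utilities every marginal gain of `f_δ` is nonnegative.
-/

open Finset

section

variable {V : Type*}

noncomputable def pairwiseObjective (α β : ℝ) (u : V → ℝ) (s : V → V → ℝ) (S : Finset V) : ℝ :=
  α * ∑ v ∈ S, u v - β / 2 * ∑ v ∈ S, ∑ w ∈ S, s v w

theorem Finset.sum_sum_cons_of_symm {M : Type*} [AddCommMonoid M] {s : V → V → M}
    (hsymm : ∀ v w, s v w = s w v) (S : Finset V) {v : V} (hv : v ∉ S) :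
    ∑ x ∈ cons v S hv, ∑ w ∈ cons v S hv, s x w
      = ∑ x ∈ S, ∑ w ∈ S, s x w + 2 • ∑ w ∈ S, s v w + s v v := by
  simp only [sum_cons, sum_add_distrib, two_nsmul]
  rw [sum_congr rfl fun x _ => hsymm x v]
  abel

theorem pairwiseObjective_cons (α β : ℝ) (u : V → ℝ) {s : V → V → ℝ}
    (hsymm : ∀ v w, s v w = s w v) (S : Finset V) {v : V} (hv : v ∉ S) :
    pairwiseObjective α β u s (cons v S hv)
      = pairwiseObjective α β u s S + (α * u v - β * ∑ w ∈ S, s v w - β / 2 * s v v) := by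
  rw [pairwiseObjective, pairwiseObjective, sum_sum_cons_of_symm hsymm, sum_cons, two_nsmul]
  ring

theorem monotone_pairwiseObjective [Fintype V] {α β : ℝ} {u : V → ℝ} {s : V → V → ℝ}
    (hβ : 0 ≤ β) (hsymm : ∀ v w, s v w = s w v) (hnn : ∀ v w, 0 ≤ s v w)
    (hrow : ∀ v, β * ∑ j, s v j ≤ α * u v) :
    Monotone (pairwiseObjective α β u s) := by
  refine monotone_iff_forall_le_cons.mpr fun S v hv => ?_
  have hcons : ∑ w ∈ S, s v w + s v v ≤ ∑ j, s v j := by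
    rw [add_comm, ← sum_cons hv]
    exact sum_le_univ_sum_of_nonneg (hnn v)
  rw [pairwiseObjective_cons α β u hsymm S hv]
  linarith [hrow v, mul_le_mul_of_nonneg_left hcons hβ, mul_nonneg hβ (hnn v v)]

end

theorem offset_objective_monotone_general {V : Type*} [Fintype V] [Nonempty V]
    (α β : ℝ) (hα : 0 < α) (hβ : 0 ≤ β)
    (u : V → ℝ) (s : V → V → ℝ)
    (hsymm : ∀ v w, s v w = s w v) (hnn : ∀ v w, 0 ≤ s v w)
    (hu : ∀ v, 0 ≤ u v)
    (δ : ℝ)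
    (hδ : δ = (β / α) * (Finset.univ.sup' Finset.univ_nonempty fun l : V => ∑ j, s l j))
    (fδ : Finset V → ℝ)
    (hfδ : ∀ S : Finset V,
      fδ S = α * ∑ v ∈ S, (u v + δ) - (β / 2) * ∑ v ∈ S, ∑ w ∈ S, s v w) :
    ∀ A B : Finset V, B ⊆ A → fδ B ≤ fδ A := by
  have hf : fδ = pairwiseObjective α β (fun v => u v + δ) s := funext hfδ
  have hrow (v : V) : β * ∑ j, s v j ≤ α * (u v + δ) := by
    have hαδ : α * δ = β * univ.sup' univ_nonempty fun l : V => ∑ j, s l j := by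
      rw [hδ]
      field_simp
    have hsup := mul_le_mul_of_nonneg_left (le_sup' (fun l : V => ∑ j, s l j) (mem_univ v)) hβ
    linarith [mul_nonneg hα.le (hu v)]
  intro A B hBA
  rw [hf]
  exact monotone_pairwiseObjective hβ hsymm hnn hrow hBA

/-- Adding the offset `δ = (β/α) · max_l Σ_j s l j` to all (nonnegative) utilities makes the
pairwise objective monotone non-decreasing. -/
theorem offset_objective_monotone {V : Type*} [Fintype V] [DecidableEq V] [Nonempty V]
    (α β : ℝ) (hα : 0 < α) (hβ : 0 ≤ β)
    (u : V → ℝ) (s : V → V → ℝ)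
    (hsymm : ∀ v w, s v w = s w v) (hnn : ∀ v w, 0 ≤ s v w)
    (hdiag : ∀ v, s v v = 0)
    (hu : ∀ v, 0 ≤ u v)
    (δ : ℝ)
    (hδ : δ = (β / α) * (Finset.univ.sup' Finset.univ_nonempty fun l : V => ∑ j, s l j))
    (fδ : Finset V → ℝ)
    (hfδ : ∀ S : Finset V,
      fδ S = α * ∑ v ∈ S, (u v + δ) - (β / 2) * ∑ v ∈ S, ∑ w ∈ S, s v w) :
    ∀ A B : Finset V, B ⊆ A → fδ B ≤ fδ A :=
  offset_objective_monotone_general α β hα hβ u s hsymm hnn hu δ hδ fδ hfδ
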